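/- arXiv:1307.4783 — 3 statements merged into one kernel-verified Lean document; each statement's English description precedes it below -/
import Mathlib

section
/- Let 0 → A →(i) B →(p) C → 0 be an exact sequence of Hausdorff, locally compact, totally disconnected topological abelian groups; that is, i is a continuous injective group homomorphism, p is a continuous surjective group homomorphism, and the range of i equals the kernel of p. Assume moreover that i and p are strict morphisms: i is a topological embedding of A onto its image (the image carrying the subspace topology from B), and p is a topological quotient map (C carries the quotient topology induced from B). Then the dual sequence 0 → C^D → B^D → A^D → 0 is exact; explicitly: the map C^D → B^D given by g ↦ g ∘ p is injective, its range is exactly the set of f ∈ B^D with f ∘ i = 0, and the map B^D → A^D given by f ↦ f ∘ i is surjective. -/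
/-- The group `ℚ/ℤ` (the quotient of `ℚ` by `ℤ`), equipped with the discrete topology. -/
def QZ : Type := ℚ ⧸ AddSubgroup.zmultiples (1 : ℚ)

noncomputable instance : AddCommGroup QZ :=
  inferInstanceAs (AddCommGroup (ℚ ⧸ AddSubgroup.zmultiples (1 : ℚ)))

instance : TopologicalSpace QZ := ⊥

instance : DiscreteTopology QZ := ⟨rfl⟩

instance : IsTopologicalAddGroup QZ where
  continuous_add := continuous_of_discreteTopology
  continuous_neg := continuous_of_discreteTopology

/-!
Dualising into the discrete divisible group `ℚ/ℤ`: injectivity of `p^D` is surjectivity of `p`,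
and exactness in the middle is the factorisation of a character through the quotient map `p`.
For surjectivity of `i^D`, a continuous character `h` of `A` has open kernel. Since `i` is an
embedding and, by van Dantzig's theorem, `0` has a basis of open subgroups in `B`, some open
subgroup `V ≤ B` satisfies `i⁻¹(V) ≤ ker h`. Then `h` factors through `A/i⁻¹(V) ↪ B/V`, extends
to `B/V` because `ℚ/ℤ` is divisible (Baer), and the resulting character of `B` is continuous
because its kernel contains `V`.
-/

noncomputable instance : DivisibleBy QZ ℤ :=
  inferInstanceAs (DivisibleBy (ℚ ⧸ AddSubgroup.zmultiples (1 : ℚ)) ℤ)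

open Set Filter Topology
open scoped Pointwise

theorem AddAction.stabilizer_subset_of_zero_mem {G : Type*} [AddGroup G] {U : Set G}
    (hU : (0 : G) ∈ U) : (AddAction.stabilizer G U : Set G) ⊆ U := fun g hg => by
  simpa [AddAction.mem_stabilizer_iff.mp hg] using vadd_mem_vadd_set (a := g) hU

section VanDantzig

variable {G : Type*} [AddGroup G] [TopologicalSpace G] [IsTopologicalAddGroup G]

theorem IsCompact.isOpen_addStabilizer {U : Set G} (hUc : IsCompact U) (hUo : IsOpen U) :
    IsOpen (AddAction.stabilizer G U : Set G) := by
  obtain ⟨T, hT, hTU⟩ := compact_open_separated_add_left hUc hUo subset_rfl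
  have hvadd_subset : ∀ t ∈ T, t +ᵥ U ⊆ U := fun t ht _ ⟨u, hu, htu⟩ =>
    htu ▸ hTU (add_mem_add ht hu)
  refine AddSubgroup.isOpen_of_mem_nhds _ (g := 0) <|
    mem_of_superset (inter_mem hT (neg_mem_nhds_zero G hT)) fun t ⟨ht, ht'⟩ => ?_
  refine (hvadd_subset t ht).antisymm fun u hu => ⟨-t + u, hvadd_subset _ ht' ⟨u, hu, rfl⟩, ?_⟩
  simp

theorem exists_openAddSubgroup_subset_of_mem_nhds_zero [T2Space G] [LocallyCompactSpace G]
    [TotallyDisconnectedSpace G] {W : Set G} (hW : W ∈ 𝓝 0) :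
    ∃ H : OpenAddSubgroup G, (H : Set G) ⊆ W := by
  obtain ⟨K, hK, hKW, hKc⟩ := local_compact_nhds hW
  obtain ⟨U, ⟨hUclosed, hUopen⟩, hU0, hUK⟩ :=
    loc_compact_Haus_tot_disc_of_zero_dim.mem_nhds_iff.mp hK
  have hUc : IsCompact U := hKc.of_isClosed_subset hUclosed hUK
  exact ⟨⟨AddAction.stabilizer G U, hUc.isOpen_addStabilizer hUopen⟩,
    (AddAction.stabilizer_subset_of_zero_mem hU0).trans (hUK.trans hKW)⟩

end VanDantzig

theorem AddMonoidHom.continuous_of_isOpen_le_ker {G Q : Type*} [AddCommGroup G]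
    [TopologicalSpace G] [IsTopologicalAddGroup G] [AddGroup Q] [TopologicalSpace Q]
    [DiscreteTopology Q] (f : G →+ Q) {V : AddSubgroup G} (hV : IsOpen (V : Set G))
    (hVf : V ≤ f.ker) : Continuous f :=
  have := QuotientAddGroup.discreteTopology hV
  (continuous_of_discreteTopology (f := QuotientAddGroup.lift V f hVf)).comp continuous_quot_mk

theorem Topology.IsQuotientMap.exists_continuous_comp_eq_iff {B C Q : Type*} [AddGroup B]
    [TopologicalSpace B] [AddGroup C] [TopologicalSpace C] [AddGroup Q] [TopologicalSpace Q]
    {p : B →+ C} (hp : IsQuotientMap p) {f : B →+ Q} (hf : Continuous f) :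
    (∃ g : C →+ Q, Continuous g ∧ g.comp p = f) ↔ p.ker ≤ f.ker := by
  refine ⟨?_, fun hker => ?_⟩
  · rintro ⟨g, -, rfl⟩ b hb
    simp [AddMonoidHom.mem_ker.mp hb]
  · have hinv := Function.rightInverse_surjInv hp.surjective
    have hcomp := p.liftOfRightInverse_comp _ hinv ⟨f, hker⟩
    refine ⟨p.liftOfRightInverse _ hinv ⟨f, hker⟩, ?_, hcomp⟩
    rw [hp.continuous_iff, ← AddMonoidHom.coe_comp, hcomp]
    exact hf

theorem AddMonoidHom.exists_extension_of_comap_le_ker {A B Q : Type*} [AddCommGroup A]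
    [AddCommGroup B] [AddCommGroup Q] [DivisibleBy Q ℤ] (i : A →+ B) {V : AddSubgroup B}
    {h : A →+ Q} (hV : V.comap i ≤ h.ker) : ∃ f : B →+ Q, V ≤ f.ker ∧ f.comp i = h := by
  set ibar := QuotientAddGroup.map (V.comap i) V i le_rfl
  have hibar : Function.Injective ibar := by
    rw [injective_iff_map_eq_zero]
    rintro ⟨a⟩ ha
    exact (QuotientAddGroup.eq_zero_iff a).mpr ((QuotientAddGroup.eq_zero_iff (i a)).mp ha)
  obtain ⟨fbar, hfbar⟩ := (Module.Baer.of_divisible Q).extension_property_addMonoidHom ibar hibar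
    (QuotientAddGroup.lift _ h hV)
  refine ⟨fbar.comp (QuotientAddGroup.mk' V), fun v hv => ?_, ?_⟩
  · simp [(QuotientAddGroup.eq_zero_iff v).mpr hv]
  · ext a
    exact DFunLike.congr_fun hfbar (a : A ⧸ V.comap i)

theorem Topology.IsInducing.exists_continuous_comp_eq {A B Q : Type*} [AddCommGroup A]
    [TopologicalSpace A] [AddCommGroup B] [TopologicalSpace B] [IsTopologicalAddGroup B]
    [T2Space B] [LocallyCompactSpace B] [TotallyDisconnectedSpace B] [AddCommGroup Q]
    [TopologicalSpace Q] [DiscreteTopology Q] [DivisibleBy Q ℤ] {i : A →+ B} (hi : IsInducing i)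
    {h : A →+ Q} (hh : Continuous h) : ∃ f : B →+ Q, Continuous f ∧ f.comp i = h := by
  have hker : (h.ker : Set A) ∈ 𝓝 0 :=
    hh.continuousAt.preimage_mem_nhds (t := {0}) (by simp [nhds_discrete])
  obtain ⟨W, hW, hWker⟩ := (hi.nhds_eq_comap 0 ▸ hker : _ ∈ comap i (𝓝 (i 0)))
  obtain ⟨V, hVW⟩ := exists_openAddSubgroup_subset_of_mem_nhds_zero (map_zero i ▸ hW)
  obtain ⟨f, hVf, hfi⟩ :=
    i.exists_extension_of_comap_le_ker (V := V) fun a ha => hWker (hVW ha)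
  exact ⟨f, f.continuous_of_isOpen_le_ker V.isOpen hVf, hfi⟩

theorem dual_sequence_exact_general
    {A B C : Type*}
    [AddCommGroup A] [TopologicalSpace A]
    [AddCommGroup B] [TopologicalSpace B] [IsTopologicalAddGroup B]
    [AddCommGroup C] [TopologicalSpace C]
    [T2Space B] [LocallyCompactSpace B] [TotallyDisconnectedSpace B]
    (i : A →+ B) (p : B →+ C)
    (hp_surj : Function.Surjective p)
    (hexact : i.range = p.ker)
    (hi_strict : Topology.IsEmbedding i)
    (hp_strict : Topology.IsQuotientMap p) :
    (∀ g₁ g₂ : C →+ QZ, Continuous g₁ → Continuous g₂ →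
        g₁.comp p = g₂.comp p → g₁ = g₂) ∧
    (∀ f : B →+ QZ, Continuous f →
        (f.comp i = 0 ↔ ∃ g : C →+ QZ, Continuous g ∧ g.comp p = f)) ∧
    (∀ h : A →+ QZ, Continuous h →
        ∃ f : B →+ QZ, Continuous f ∧ f.comp i = h) := by
  refine ⟨fun _ _ _ _ => (AddMonoidHom.cancel_right hp_surj).mp, fun f hf => ?_,
    fun _ hh => hi_strict.isInducing.exists_continuous_comp_eq hh⟩
  rw [← AddMonoidHom.range_le_ker_iff, hexact, hp_strict.exists_continuous_comp_eq_iff hf]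

/-- Lemma 2.7 (Poitou–Tate duality lemma): given a short exact sequence
`0 → A → B → C → 0` of Hausdorff, locally compact, totally disconnected topological
abelian groups with strict morphisms (`i` an embedding onto its image, `p` a quotient
map), the dual sequence `0 → C^D → B^D → A^D → 0` is exact. -/
theorem dual_sequence_exact
    {A B C : Type*}
    [AddCommGroup A] [TopologicalSpace A] [IsTopologicalAddGroup A]
    [AddCommGroup B] [TopologicalSpace B] [IsTopologicalAddGroup B]
    [AddCommGroup C] [TopologicalSpace C] [IsTopologicalAddGroup C]
    [T2Space A] [LocallyCompactSpace A] [TotallyDisconnectedSpace A]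
    [T2Space B] [LocallyCompactSpace B] [TotallyDisconnectedSpace B]
    [T2Space C] [LocallyCompactSpace C] [TotallyDisconnectedSpace C]
    (i : A →+ B) (p : B →+ C)
    (hi_cont : Continuous i) (hp_cont : Continuous p)
    (hi_inj : Function.Injective i) (hp_surj : Function.Surjective p)
    (hexact : i.range = p.ker)
    (hi_strict : Topology.IsEmbedding i)
    (hp_strict : Topology.IsQuotientMap p) :
    (∀ g₁ g₂ : C →+ QZ, Continuous g₁ → Continuous g₂ →
        g₁.comp p = g₂.comp p → g₁ = g₂) ∧
    (∀ f : B →+ QZ, Continuous f →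
        (f.comp i = 0 ↔ ∃ g : C →+ QZ, Continuous g ∧ g.comp p = f)) ∧
    (∀ h : A →+ QZ, Continuous h →
        ∃ f : B →+ QZ, Continuous f ∧ f.comp i = h) :=
  dual_sequence_exact_general i p hp_surj hexact hi_strict hp_strict
end

section
/- Let B be a Hausdorff, locally compact, totally disconnected topological abelian group, and let A ⊆ B be a subgroup equipped with the subspace topology. Then every continuous group homomorphism f : A → ℚ/ℤ extends to a continuous group homomorphism g : B → ℚ/ℤ, i.e., there exists a continuous homomorphism g : B → ℚ/ℤ with g(a) = f(a) for all a ∈ A. -/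
noncomputable instance inst_s1 : DivisibleBy QZ ℤ :=
  (QuotientAddGroup.mk'_surjective (AddSubgroup.zmultiples (1 : ℚ))).divisibleBy _
    fun _ _ ↦ map_zsmul _ _ _

open scoped Pointwise
open Set Filter Topology

@[to_additive]
theorem IsCompact.exists_openSubgroup_subset_of_isOpen {G : Type*} [Group G] [TopologicalSpace G]
    [IsTopologicalGroup G] {W : Set G} (hWc : IsCompact W) (hWo : IsOpen W) (hW1 : (1 : G) ∈ W) :
    ∃ H : OpenSubgroup G, (H : Set G) ⊆ W := by
  obtain ⟨V, hV, hVW⟩ := compact_open_separated_mul_left hWc hWo subset_rfl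
  have hstab : (MulAction.stabilizer G W : Set G) ∈ 𝓝 1 := by
    refine mem_of_superset (inter_mem hV (inv_mem_nhds_one G hV)) fun g ⟨hg, hg'⟩ ↦ ?_
    refine Subset.antisymm ?_ fun x hx ↦ ?_
    · rintro _ ⟨w, hw, rfl⟩
      exact hVW (mul_mem_mul hg hw)
    · exact mem_smul_set_iff_inv_smul_mem.mpr (hVW (mul_mem_mul hg' hx))
  refine ⟨⟨_, Subgroup.isOpen_of_mem_nhds _ hstab⟩, fun g (hg : g • W = W) ↦ ?_⟩
  exact hg ▸ mem_smul_set.mpr ⟨1, hW1, mul_one g⟩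

@[to_additive]
theorem NonarchimedeanGroup.of_locallyCompactSpace_of_totallyDisconnectedSpace
    (G : Type*) [Group G] [TopologicalSpace G] [IsTopologicalGroup G] [LocallyCompactSpace G]
    [TotallyDisconnectedSpace G] : NonarchimedeanGroup G where
  is_nonarchimedean U hU := by
    obtain ⟨C, hC, hCU, hCc⟩ := local_compact_nhds hU
    obtain ⟨W, hW, hW1, hWint⟩ :=
      loc_compact_Haus_tot_disc_of_zero_dim.mem_nhds_iff.mp (interior_mem_nhds.mpr hC)
    have hWC : W ⊆ C := hWint.trans interior_subset
    obtain ⟨H, hHW⟩ :=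
      (hCc.of_isClosed_subset hW.isClosed hWC).exists_openSubgroup_subset_of_isOpen hW.isOpen hW1
    exact ⟨H, hHW.trans (hWC.trans hCU)⟩

@[to_additive]
theorem MonoidHom.exists_openSubgroup_subgroupOf_le_ker {G M : Type*} [Group G] [TopologicalSpace G]
    [NonarchimedeanGroup G] [MulOneClass M] [TopologicalSpace M] [DiscreteTopology M]
    {A : Subgroup G} (f : A →* M) (hf : Continuous f) :
    ∃ H : OpenSubgroup G, (H : Subgroup G).subgroupOf A ≤ f.ker := by
  have hker : (f.ker : Set A) ∈ 𝓝 1 := ((isOpen_discrete {1}).preimage hf).mem_nhds (map_one f)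
  obtain ⟨U, hU, hUA⟩ := (mem_nhds_subtype _ _ _).mp hker
  obtain ⟨H, hHU⟩ := NonarchimedeanGroup.is_nonarchimedean U hU
  exact ⟨H, fun a ha ↦ hUA (hHU ha)⟩

@[to_additive]
theorem QuotientGroup.map_subtype_subgroupOf_injective {G : Type*} [Group G] (A H : Subgroup G)
    [H.Normal] : Function.Injective (map (H.subgroupOf A) H A.subtype le_rfl) := by
  refine (injective_iff_map_eq_one _).mpr fun x hx ↦ ?_
  induction x using QuotientGroup.induction_on with
  | H a => exact (eq_one_iff a).mpr ((eq_one_iff (a : G)).mp hx)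

theorem AddMonoidHom.exists_extension_of_addSubgroupOf_le_ker {B Q : Type*} [AddCommGroup B]
    [AddCommGroup Q] [DivisibleBy Q ℤ] {A H : AddSubgroup B} (f : A →+ Q)
    (hf : H.addSubgroupOf A ≤ f.ker) : ∃ g : B →+ Q, H ≤ g.ker ∧ g.comp A.subtype = f := by
  obtain ⟨g, hg⟩ := (Module.Baer.of_divisible Q).extension_property_addMonoidHom _
    (QuotientAddGroup.map_subtype_addSubgroupOf_injective A H) (QuotientAddGroup.lift _ f hf)
  refine ⟨g.comp (QuotientAddGroup.mk' H), fun b hb ↦ ?_, ?_⟩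
  · simp [(QuotientAddGroup.eq_zero_iff b).mpr hb]
  · ext a
    exact DFunLike.congr_fun hg (a : A ⧸ H.addSubgroupOf A)

@[to_additive]
theorem MonoidHom.continuous_of_le_ker {G M : Type*} [Group G] [TopologicalSpace G]
    [IsTopologicalGroup G] [MulOneClass M] [TopologicalSpace M] [ContinuousMul M] (f : G →* M)
    (H : OpenSubgroup G) (hH : (H : Subgroup G) ≤ f.ker) : Continuous f :=
  continuous_of_continuousAt_one f <| continuousAt_const.congr <|
    mem_of_superset H.mem_nhds_one fun _ hg ↦ (map_one f).trans (hH hg).symm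

theorem extend_continuous_hom_of_locallyCompact_general
    {B : Type*} [AddCommGroup B] [TopologicalSpace B] [IsTopologicalAddGroup B]
    [LocallyCompactSpace B] [TotallyDisconnectedSpace B]
    (A : AddSubgroup B) (f : A →+ QZ) (hf : Continuous f) :
    ∃ g : B →+ QZ, Continuous g ∧ ∀ a : A, g a = f a := by
  have := NonarchimedeanAddGroup.of_locallyCompactSpace_of_totallyDisconnectedSpace B
  obtain ⟨H, hH⟩ := f.exists_openAddSubgroup_addSubgroupOf_le_ker hf
  obtain ⟨g, hgH, hgf⟩ := f.exists_extension_of_addSubgroupOf_le_ker hH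
  exact ⟨g, g.continuous_of_le_ker H hgH, DFunLike.congr_fun hgf⟩

/-- Every continuous homomorphism from a subgroup of a Hausdorff, locally compact,
totally disconnected topological abelian group `B` to `ℚ/ℤ` extends to a continuous
homomorphism on all of `B`. -/
theorem extend_continuous_hom_of_locallyCompact
    {B : Type*} [AddCommGroup B] [TopologicalSpace B] [IsTopologicalAddGroup B]
    [T2Space B] [LocallyCompactSpace B] [TotallyDisconnectedSpace B]
    (A : AddSubgroup B) (f : A →+ QZ) (hf : Continuous f) :
    ∃ g : B →+ QZ, Continuous g ∧ ∀ a : A, g a = f a :=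
  extend_continuous_hom_of_locallyCompact_general A f hf
end

section
/- Let B be a topological abelian group and let A ⊆ B be an open subgroup, equipped with the subspace topology. Then every continuous group homomorphism f : A → ℚ/ℤ extends to a continuous group homomorphism g : B → ℚ/ℤ, i.e., there exists a continuous homomorphism g : B → ℚ/ℤ with g(a) = f(a) for all a ∈ A. -/
theorem AddSubgroup.exists_extension_of_divisibleBy {B Q : Type*} [AddCommGroup B]
    [AddCommGroup Q] [DivisibleBy Q ℤ] (A : AddSubgroup B) (f : A →+ Q) :
    ∃ g : B →+ Q, g.comp A.subtype = f :=
  (Module.Baer.of_divisible Q).extension_property_addMonoidHom A.subtype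
    Subtype.val_injective f

theorem AddMonoidHom.continuous_of_continuous_comp_subtype_of_isOpen {G M : Type*}
    [AddGroup G] [TopologicalSpace G] [IsTopologicalAddGroup G]
    [AddZeroClass M] [TopologicalSpace M] [ContinuousAdd M]
    {A : AddSubgroup G} (hA : IsOpen (A : Set G)) (g : G →+ M)
    (hg : Continuous (g.comp A.subtype)) : Continuous g :=
  continuous_of_continuousAt_zero g <|
    (hA.isOpenEmbedding_subtypeVal.continuousAt_iff (x := (0 : A))).1 hg.continuousAt

/-- Every continuous homomorphism from an open subgroup of a topological abelian
group `B` to `ℚ/ℤ` extends to a continuous homomorphism on all of `B`. -/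
theorem extend_continuous_hom_of_isOpen
    {B : Type*} [AddCommGroup B] [TopologicalSpace B] [IsTopologicalAddGroup B]
    (A : AddSubgroup B) (hA : IsOpen (A : Set B))
    (f : A →+ QZ) (hf : Continuous f) :
    ∃ g : B →+ QZ, Continuous g ∧ ∀ a : A, g a = f a := by
  obtain ⟨g, hg⟩ := A.exists_extension_of_divisibleBy f
  exact ⟨g, g.continuous_of_continuous_comp_subtype_of_isOpen hA (hg ▸ hf),
    DFunLike.congr_fun hg⟩
end
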